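/- Let Σ be a symmetric positive definite n×n real matrix, D a (not necessarily invertible) n×n real matrix, and W a symmetric positive definite n×n real matrix. Then the matrix M := Σ⁻¹ - Dᵀ (D Σ Dᵀ + W)⁻¹ D is positive definite. -/

import Mathlib

/-!
By the Woodbury identity, `Σ⁻¹ - Dᵀ (D Σ Dᵀ + W)⁻¹ D = (Σ + Σ Dᵀ W⁻¹ D Σ)⁻¹`, and the
matrix inverted on the right is a positive definite `Σ` plus a positive semidefinite
congruence of `W⁻¹`.
-/

open Matrix

namespace Matrix

variable {m n α : Type*} [Fintype m] [Fintype n] [DecidableEq m] [DecidableEq n] [CommRing α]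

theorem inv_sub_mul_inv_mul_eq_inv {S : Matrix n n α} {W : Matrix m m α}
    (U : Matrix n m α) (V : Matrix m n α) (hS : IsUnit S) (hW : IsUnit W)
    (hK : IsUnit (V * S * U + W)) :
    S⁻¹ - U * (V * S * U + W)⁻¹ * V = (S + S * U * W⁻¹ * V * S)⁻¹ := by
  have hSdet := (isUnit_iff_isUnit_det S).mp hS
  have hWinv : W⁻¹⁻¹ = W := nonsing_inv_nonsing_inv W ((isUnit_iff_isUnit_det W).mp hW)
  have hVSU : V * S * S⁻¹ * (S * U) = V * S * U := by
    rw [mul_nonsing_inv_cancel_right _ _ hSdet, Matrix.mul_assoc]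
  have hWoodbury := add_mul_mul_inv_eq_sub S (S * U) W⁻¹ (V * S) hS
    (isUnit_nonsing_inv_iff.mpr hW) (by rwa [hWinv, hVSU, add_comm])
  rwa [hWinv, hVSU, add_comm W, ← Matrix.mul_assoc _ V S, ← Matrix.mul_assoc _ V S,
    nonsing_inv_mul_cancel_left _ _ hSdet, mul_nonsing_inv_cancel_right _ _ hSdet,
    eq_comm] at hWoodbury

end Matrix

/-- The Lyapunov decrement matrix `M = Σ⁻¹ - Dᵀ (D Σ Dᵀ + W)⁻¹ D` is positive definite
whenever `Σ ≻ 0` and `W ≻ 0` (`D` need not be invertible). -/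
theorem lyapunov_decrement_posDef {n : ℕ}
    (S W D : Matrix (Fin n) (Fin n) ℝ) (hS : S.PosDef) (hW : W.PosDef) :
    (S⁻¹ - Dᵀ * (D * S * Dᵀ + W)⁻¹ * D).PosDef := by
  have hSt : Sᵀ = S := hS.isHermitian
  have hDSD : (D * S * Dᵀ).PosSemidef := by
    simpa using hS.posSemidef.mul_mul_conjTranspose_same D
  have hSDWDS : (S * Dᵀ * W⁻¹ * D * S).PosSemidef := by
    simpa [Matrix.mul_assoc, hSt] using hW.inv.posSemidef.conjTranspose_mul_mul_same (D * S)
  rw [inv_sub_mul_inv_mul_eq_inv Dᵀ D hS.isUnit hW.isUnit (PosDef.posSemidef_add hDSD hW).isUnit]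
  exact (hS.add_posSemidef hSDWDS).inv
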